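/- Let h_i(x) = x⁺ for every i ∈ 𝐈 and let M = max_{j∈𝐉} |G_j|. Then for every t ≥ 0 the ⪕-greatest element F(t) of A_t satisfies: min_{i∈𝐈} F_i(t) = t/M, and F_i(t) = t/M for every i belonging to some G_j with |G_j| = M. -/

import Mathlib

/-- The set of indices at which `a` attains its minimum. -/
noncomputable def argminSet {n : ℕ} (a : Fin n → ℝ) : Finset (Fin n) :=
  Finset.univ.filter (fun i => ∀ j, a i ≤ a j)

/-- The minimum entry of `a`. -/
noncomputable def minval {n : ℕ} (a : Fin n → ℝ) : ℝ := ⨅ i, a i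

/-- The restriction of `a` to the indices in `S`, reindexed by `Fin S.card`
in increasing order. -/
noncomputable def restrictVec {n : ℕ} (S : Finset (Fin n)) (a : Fin n → ℝ) :
    Fin S.card → ℝ :=
  fun i => a (S.orderIsoOfFin rfl i).1

/-- The "min-sensitive" partial order `⪕` on `ℝⁿ` (Definition 1 of the paper):
for `n = 1` it is the usual order; for `n ≥ 2`, `a ⪕ b` iff (i) `a = b`, or
(ii) `min a < min b`, or (iii) `min a = min b` and `Argmin b ⊊ Argmin a`, or
(iv) `min a = min b`, `Argmin a = Argmin b ⊊ {1,...,n}` and the restrictions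
of `a` and `b` to the complement of the common argmin set are related. -/
noncomputable def msLE : (n : ℕ) → (Fin n → ℝ) → (Fin n → ℝ) → Prop
  | 0, _, _ => True
  | 1, a, b => a 0 ≤ b 0
  | n + 2, a, b =>
    a = b ∨
    minval a < minval b ∨
    (minval a = minval b ∧ argminSet b ⊂ argminSet a) ∨
    (minval a = minval b ∧ argminSet a = argminSet b ∧ argminSet a ⊂ Finset.univ ∧
      msLE ((argminSet a)ᶜ).card (restrictVec (argminSet a)ᶜ a) (restrictVec (argminSet a)ᶜ b))
termination_by n => n
decreasing_by
  have hne : (argminSet a).Nonempty := by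
    obtain ⟨i, -, hi⟩ := Finset.exists_min_image Finset.univ a ⟨0, Finset.mem_univ 0⟩
    refine ⟨i, ?_⟩
    unfold argminSet
    exact Finset.mem_filter.mpr ⟨Finset.mem_univ i, fun j => hi j (Finset.mem_univ j)⟩
  have h1 : 0 < (argminSet a).card := Finset.card_pos.mpr hne
  have h2 : ((argminSet a)ᶜ).card = Fintype.card (Fin (n + 2)) - (argminSet a).card :=
    Finset.card_compl _
  simp only [Fintype.card_fin] at h2
  omega

/-- `x*_i`: the supremum of the zero set of a function. -/
noncomputable def xstar (f : ℝ → ℝ) : ℝ := sSup {x | f x = 0}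

/-- The admissible set `A_t`. -/
def admissible (I J : ℕ) (h : Fin I → ℝ → ℝ) (G : Fin J → Finset (Fin I)) (t : ℝ) :
    Set (Fin I → ℝ) :=
  {a | (∀ i, a i ≤ t) ∧ ∀ j, (∑ i ∈ G j, h i (a i)) ≤ t}

/-- `F` is the `⪕`-greatest element of `A_t`. -/
def IsGreatestMS (I J : ℕ) (h : Fin I → ℝ → ℝ) (G : Fin J → Finset (Fin I)) (t : ℝ)
    (F : Fin I → ℝ) : Prop :=
  F ∈ admissible I J h G t ∧ ∀ a ∈ admissible I J h G t, msLE I a F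

/-!
The constant vector `t / M` lies in `A_t`, so `F ⪰ t / M` forces `min F ≥ t / M`. On a group of
maximal size `M` the constraint `∑ F_i⁺ ≤ t = M · (t / M)` then leaves no room for an entry above
`t / M`: all its entries equal `t / M`, and so does the minimum.
-/

open Finset

lemma minval_le {n : ℕ} (a : Fin n → ℝ) (i : Fin n) : minval a ≤ a i :=
  ciInf_le (Set.finite_range a).bddBelow i

lemma le_minval_of_msLE_const : ∀ {n : ℕ}, 0 < n → ∀ (c : ℝ) (b : Fin n → ℝ),
    msLE n (fun _ => c) b → c ≤ minval b
  | 0, hn, _, _, _ => absurd hn (lt_irrefl 0)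
  | 1, _, c, b, h => by
      rw [msLE] at h
      rwa [show minval b = b 0 from ciInf_unique]
  | n + 2, _, c, b, h => by
      have hc : minval (fun _ : Fin (n + 2) => c) = c := ciInf_const
      rw [msLE] at h
      rcases h with h | h | ⟨h, -⟩ | ⟨h, -⟩
      · rw [← h, hc]
      all_goals rw [hc] at h; exact h.le

lemma const_mem_admissible_posPart {I J M : ℕ} {G : Fin J → Finset (Fin I)} {t : ℝ}
    (hM : 0 < M) (hG : ∀ j, (G j).card ≤ M) (ht : 0 ≤ t) :
    (fun _ => t / M) ∈ admissible I J (fun _ x => max x 0) G t := by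
  have hMpos : (0 : ℝ) < M := by exact_mod_cast hM
  have htM : 0 ≤ t / M := div_nonneg ht hMpos.le
  refine ⟨fun _ => div_le_self ht (by exact_mod_cast hM), fun j => ?_⟩
  rw [sum_congr rfl fun _ _ => max_eq_left htM, sum_const, nsmul_eq_mul]
  calc ((G j).card : ℝ) * (t / M) ≤ M * (t / M) := by gcongr; exact_mod_cast hG j
    _ = t := mul_div_cancel₀ t hMpos.ne'

lemma eq_of_sum_posPart_le_card_mul {ι : Type*} {s : Finset ι} {x : ι → ℝ} {c : ℝ}
    (hc : 0 ≤ c) (hx : ∀ k ∈ s, c ≤ x k) (hsum : ∑ k ∈ s, max (x k) 0 ≤ s.card * c) :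
    ∀ k ∈ s, x k = c := by
  have hle : ∀ k ∈ s, c ≤ max (x k) 0 := fun k hk => (hx k hk).trans (le_max_left _ _)
  have heq : ∑ _k ∈ s, c = ∑ k ∈ s, max (x k) 0 :=
    le_antisymm (sum_le_sum hle) (by rwa [sum_const, nsmul_eq_mul])
  intro k hk
  rw [← max_eq_left (hc.trans (hx k hk)), ((sum_eq_sum_iff_of_le hle).mp heq k hk)]

theorem F_example_linear_general
    (I J : ℕ) (hJ : 0 < J)
    (G : Fin J → Finset (Fin I))
    (hGne : ∀ j, (G j).Nonempty)
    (t : ℝ) (ht : 0 ≤ t)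
    (F : Fin I → ℝ)
    (hF : IsGreatestMS I J (fun _ x => max x 0) G t F) :
    minval F = t / (Finset.univ.sup fun j => (G j).card : ℕ) ∧
    ∀ j : Fin J, (G j).card = (Finset.univ.sup fun j' => (G j').card) →
      ∀ i ∈ G j, F i = t / (Finset.univ.sup fun j' => (G j').card : ℕ) := by
  set M : ℕ := univ.sup fun j => (G j).card
  have hGM : ∀ j, (G j).card ≤ M := fun j => le_sup (f := fun j => (G j).card) (mem_univ j)
  obtain ⟨j₀, -, hj₀⟩ := exists_mem_eq_sup univ (univ_nonempty_iff.mpr ⟨⟨0, hJ⟩⟩)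
    fun j => (G j).card
  obtain ⟨i₀, hi₀⟩ := hGne j₀
  have hM : 0 < M := (card_pos.mpr ⟨i₀, hi₀⟩).trans_le (hGM j₀)
  have hlow : t / M ≤ minval F := le_minval_of_msLE_const i₀.pos _ F
    (hF.2 _ (const_mem_admissible_posPart hM hGM ht))
  have hmax : ∀ j, (G j).card = M → ∀ i ∈ G j, F i = t / M := by
    intro j hj
    refine eq_of_sum_posPart_le_card_mul (div_nonneg ht (Nat.cast_nonneg M))
      (fun k _ => hlow.trans (minval_le F k)) ?_
    rw [hj, mul_div_cancel₀ t (by exact_mod_cast hM.ne')]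
    exact hF.1.2 j
  exact ⟨le_antisymm ((minval_le F i₀).trans (hmax j₀ hj₀.symm i₀ hi₀).le) hlow, hmax⟩

/-- Example 1 of the paper: for `h_i(x) = x⁺` and
`M = max_j |G_j|`, the `⪕`-greatest element `F(t)` of `A_t` satisfies
`min_i F_i(t) = t / M`, and `F_i(t) = t / M` whenever `i` belongs to a group of
maximal cardinality. -/
theorem F_example_linear
    (I J : ℕ) (hI : 0 < I) (hJ : 0 < J)
    (G : Fin J → Finset (Fin I))
    (hGinj : Function.Injective G)
    (hGne : ∀ j, (G j).Nonempty)
    (hGcover : ∀ i, ∃ j, i ∈ G j)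
    (t : ℝ) (ht : 0 ≤ t)
    (F : Fin I → ℝ)
    (hF : IsGreatestMS I J (fun _ x => max x 0) G t F) :
    minval F = t / (Finset.univ.sup fun j => (G j).card : ℕ) ∧
    ∀ j : Fin J, (G j).card = (Finset.univ.sup fun j' => (G j').card) →
      ∀ i ∈ G j, F i = t / (Finset.univ.sup fun j' => (G j').card : ℕ) :=
  F_example_linear_general I J hJ G hGne t ht F hF
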